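/- arXiv:2512.12589 — 4 statements merged into one kernel-verified Lean document; each statement's English description precedes it below -/
import Mathlib

section
/- Let G be a group and let A₀, A₁, B₀, B₁ be subsets such that each Aᵢ is a right coset of a subgroup Uᵢ and a left coset of a subgroup Vᵢ, and each Bᵢ is a right coset of Vᵢ. If A₀ ∩ A₁ ≠ ∅ and B₀ ∩ B₁ ≠ ∅, then (A₀ ∩ A₁)·(B₀ ∩ B₁) = (A₀·B₀) ∩ (A₁·B₁), where · denotes setwise product. -/
/-!
Picking `a ∈ A₀ ∩ A₁` and `b ∈ B₀ ∩ B₁` gives `Aᵢ = a Vᵢ` and `Bᵢ = Vᵢ b`. Since `Vᵢ Vᵢ = Vᵢ`,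
both sides become `a (V₀ ∩ V₁) b`, the right-hand one because `x ↦ a x b` is injective.
-/
open Pointwise

section

variable {G : Type*} [Group G]

lemma Set.inter_mul_singleton (s t : Set G) (b : G) :
    (s ∩ t) * {b} = (s * {b}) ∩ (t * {b}) := by
  simp only [Set.mul_singleton]
  exact Set.image_inter (mul_left_injective b)

lemma Set.smul_inter_mul_singleton (a b : G) (s t : Set G) :
    a • (s ∩ t) * {b} = (a • s * {b}) ∩ (a • t * {b}) := by
  rw [Set.smul_set_inter, Set.inter_mul_singleton]

namespace Subgroup

lemma coe_mul_singleton_of_mem {V : Subgroup G} {v : G} (hv : v ∈ V) :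
    (V : Set G) * {v} = V := by
  rw [Set.mul_singleton]
  conv_rhs => rw [← op_smul_coe_set hv]
  rfl

lemma smul_coe_eq_of_mem {V : Subgroup G} {g a : G} (ha : a ∈ g • (V : Set G)) :
    g • (V : Set G) = a • V := by
  obtain ⟨v, hv, rfl⟩ := Set.mem_smul_set.mp ha
  rw [smul_eq_mul, mul_smul, smul_coe_set hv]

lemma coe_mul_singleton_eq_of_mem {V : Subgroup G} {g b : G} (hb : b ∈ (V : Set G) * {g}) :
    (V : Set G) * {g} = V * {b} := by
  obtain ⟨v, hv, _, rfl, rfl⟩ := hb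
  rw [← Set.singleton_mul_singleton, ← mul_assoc, coe_mul_singleton_of_mem hv]

lemma smul_coe_mul_coe_mul_singleton (V : Subgroup G) (a b : G) :
    a • (V : Set G) * ((V : Set G) * {b}) = a • (V : Set G) * {b} := by
  rw [smul_mul_assoc, smul_mul_assoc, ← mul_assoc, coe_mul_coe]

lemma smul_coe_inter_mul_coe_inter (V₀ V₁ : Subgroup G) (a b : G) :
    (a • (V₀ : Set G) ∩ a • (V₁ : Set G)) * ((V₀ : Set G) * {b} ∩ ((V₁ : Set G) * {b})) =
      (a • (V₀ : Set G) * ((V₀ : Set G) * {b})) ∩ (a • (V₁ : Set G) * ((V₁ : Set G) * {b})) := by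
  rw [← Set.smul_set_inter, ← Set.inter_mul_singleton, ← coe_inf, smul_coe_mul_coe_mul_singleton,
    smul_coe_mul_coe_mul_singleton, smul_coe_mul_coe_mul_singleton, coe_inf,
    Set.smul_inter_mul_singleton]

end Subgroup

end

theorem stmt1_general (G : Type*) [Group G]
    (V₀ V₁ : Subgroup G) (A₀ A₁ B₀ B₁ : Set G)
    (hA₀l : ∃ g : G, A₀ = g • (V₀ : Set G))
    (hA₁l : ∃ g : G, A₁ = g • (V₁ : Set G))
    (hB₀ : ∃ g : G, B₀ = (V₀ : Set G) * {g}) (hB₁ : ∃ g : G, B₁ = (V₁ : Set G) * {g})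
    (hA : (A₀ ∩ A₁).Nonempty) (hB : (B₀ ∩ B₁).Nonempty) :
    (A₀ ∩ A₁) * (B₀ ∩ B₁) = (A₀ * B₀) ∩ (A₁ * B₁) := by
  obtain ⟨a, ha₀, ha₁⟩ := hA
  obtain ⟨b, hb₀, hb₁⟩ := hB
  obtain ⟨g₀, rfl⟩ := hA₀l
  obtain ⟨g₁, rfl⟩ := hA₁l
  obtain ⟨h₀, rfl⟩ := hB₀
  obtain ⟨h₁, rfl⟩ := hB₁
  rw [Subgroup.smul_coe_eq_of_mem ha₀, Subgroup.smul_coe_eq_of_mem ha₁,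
    Subgroup.coe_mul_singleton_eq_of_mem hb₀, Subgroup.coe_mul_singleton_eq_of_mem hb₁]
  exact Subgroup.smul_coe_inter_mul_coe_inter V₀ V₁ a b

/-- If `Aᵢ` is a right coset of `Uᵢ` and a left coset of `Vᵢ`, and `Bᵢ` is a right coset
of `Vᵢ` (i = 0,1), and `A₀ ∩ A₁ ≠ ∅ ≠ B₀ ∩ B₁`, then
`(A₀ ∩ A₁)·(B₀ ∩ B₁) = (A₀·B₀) ∩ (A₁·B₁)`. -/
theorem stmt1 (G : Type*) [Group G]
    (U₀ U₁ V₀ V₁ : Subgroup G) (A₀ A₁ B₀ B₁ : Set G)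
    (hA₀r : ∃ g : G, A₀ = (U₀ : Set G) * {g}) (hA₀l : ∃ g : G, A₀ = g • (V₀ : Set G))
    (hA₁r : ∃ g : G, A₁ = (U₁ : Set G) * {g}) (hA₁l : ∃ g : G, A₁ = g • (V₁ : Set G))
    (hB₀ : ∃ g : G, B₀ = (V₀ : Set G) * {g}) (hB₁ : ∃ g : G, B₁ = (V₁ : Set G) * {g})
    (hA : (A₀ ∩ A₁).Nonempty) (hB : (B₀ ∩ B₁).Nonempty) :
    (A₀ ∩ A₁) * (B₀ ∩ B₁) = (A₀ * B₀) ∩ (A₁ * B₁) :=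
  stmt1_general G V₀ V₁ A₀ A₁ B₀ B₁ hA₀l hA₁l hB₀ hB₁ hA hB
end

section
/- Let G be a topological group and let W(G) be the set of left cosets of open subgroups of G from a family S_G of open subgroups closed under conjugation and finite intersection and forming a neighbourhood basis of the identity, together with ∅, where A·B is defined as the setwise product AB exactly when A is a left coset and B a right coset of the same subgroup, A⁻¹ is the setwise inverse, and ∩ is intersection. Then W(G) is a meet groupoid. -/
open Pointwise

/-- A groupoid: a partial binary operation `mul` (with `none` meaning undefined) and a
total inverse, satisfying associativity with matching definedness, with `A·A⁻¹` and
`A⁻¹·A` always defined, and the cancellation laws. -/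
structure PGroupoid (M : Type u) where
  mul : M → M → Option M
  inv : M → M
  assoc : ∀ A B C : M, ((mul A B).bind fun X => mul X C) = ((mul B C).bind fun Y => mul A Y)
  mul_inv_def : ∀ A : M, (mul A (inv A)).isSome
  inv_mul_def : ∀ A : M, (mul (inv A) A).isSome
  cancel_right : ∀ A B C : M, mul A B = some C → mul C (inv B) = some A
  cancel_left : ∀ A B C U : M, mul A B = some C → mul (inv A) A = some U → mul U B = some B

/-- A meet groupoid: a groupoid which is also a meet semilattice with least element `e`
(denoting `∅`), satisfying the compatibility axioms of Nies–Schlicht. -/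
structure MeetGroupoid (M : Type u) extends PGroupoid M where
  meet : M → M → M
  e : M
  meet_comm : ∀ A B : M, meet A B = meet B A
  meet_assoc : ∀ A B C : M, meet (meet A B) C = meet A (meet B C)
  meet_idem : ∀ A : M, meet A A = A
  meet_e : ∀ A : M, meet e A = e
  inv_e : inv e = e
  mul_e_e : mul e e = some e
  e_mul : ∀ A : M, A ≠ e → mul e A = none
  mul_e : ∀ A : M, A ≠ e → mul A e = none
  idem_meet_ne : ∀ U V : M, mul U U = some U → mul V V = some V → U ≠ e → V ≠ e →
    meet U V ≠ e
  inv_le_iff : ∀ A B : M, meet A B = A ↔ meet (inv A) (inv B) = inv A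
  meet_mul : ∀ A₀ A₁ B₀ B₁ C₀ C₁ : M, mul A₀ B₀ = some C₀ → mul A₁ B₁ = some C₁ →
    meet A₀ A₁ ≠ e → meet B₀ B₁ ≠ e →
    mul (meet A₀ A₁) (meet B₀ B₁) = some (meet C₀ C₁)

/-- A full meet groupoid: a meet groupoid satisfying the "level up" and "level down"
axioms for left and right *cosets. -/
structure FullMeetGroupoid (M : Type u) extends MeetGroupoid M where
  levelUp_left : ∀ U V A : M, mul U U = some U → mul V V = some V → meet U V = U →
    mul A U = some A → A ≠ e → ∃! B : M, mul B V = some B ∧ meet A B = A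
  levelUp_right : ∀ U V A : M, mul U U = some U → mul V V = some V → meet U V = U →
    mul U A = some A → A ≠ e → ∃! B : M, mul V B = some B ∧ meet A B = A
  levelDown_left : ∀ U V B : M, mul U U = some U → mul V V = some V → meet U V = U →
    U ≠ V → mul B V = some B → B ≠ e →
    ∃ A₀ A₁ : M, A₀ ≠ A₁ ∧ mul A₀ U = some A₀ ∧ mul A₁ U = some A₁ ∧
      meet A₀ B = A₀ ∧ meet A₁ B = A₁
  levelDown_right : ∀ U V B : M, mul U U = some U → mul V V = some V → meet U V = U →
    U ≠ V → mul V B = some B → B ≠ e →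
    ∃ A₀ A₁ : M, A₀ ≠ A₁ ∧ mul U A₀ = some A₀ ∧ mul U A₁ = some A₁ ∧
      meet A₀ B = A₀ ∧ meet A₁ B = A₁

/-!
In the division monoid `Set G`, a coset `A = g • U` satisfies `A * A⁻¹ * A = A`, with
`A⁻¹ * A = U` and `A * A⁻¹ = g • U * {g⁻¹}`. Declaring `A * B` defined exactly when
`A⁻¹ * A = B * B⁻¹` (for nonempty members of `W(G)`: `A` is a left and `B` a right coset of the same
subgroup; and `∅` is composable only with itself), the groupoid axioms follow from these identities
alone, as in an inverse semigroup. The meet axioms come from recentring: cosets through a common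
point `x` are `{x} * U` and `{x} * V`, and they meet in `{x} * (U ⊓ V)`.
-/

section DivisionMonoid

variable {M : Type*} [DivisionMonoid M]

def IsRegularInv (a : M) : Prop := a * a⁻¹ * a = a

namespace IsRegularInv

variable {a b : M}

theorem mul_inv_mul (ha : IsRegularInv a) : a * a⁻¹ * a = a := ha

theorem mul_mul_inv_of_inv_mul_eq (ha : IsRegularInv a) (h : a⁻¹ * a = b * b⁻¹) :
    a * b * b⁻¹ = a := by
  rw [mul_assoc, ← h, ← mul_assoc, ha.mul_inv_mul]

theorem inv_mul_mul_of_inv_mul_eq (hb : IsRegularInv b) (h : a⁻¹ * a = b * b⁻¹) :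
    a⁻¹ * a * b = b := by
  rw [h, hb.mul_inv_mul]

theorem mul_inv_mul_self_of_inv_mul_eq (hb : IsRegularInv b) (h : a⁻¹ * a = b * b⁻¹) :
    (a * b)⁻¹ * (a * b) = b⁻¹ * b := by
  rw [mul_inv_rev, mul_assoc, ← mul_assoc a⁻¹, hb.inv_mul_mul_of_inv_mul_eq h]

theorem mul_mul_inv_self_of_inv_mul_eq (ha : IsRegularInv a) (h : a⁻¹ * a = b * b⁻¹) :
    (a * b) * (a * b)⁻¹ = a * a⁻¹ := by
  rw [mul_inv_rev, ← mul_assoc, ha.mul_mul_inv_of_inv_mul_eq h]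

theorem inv_mul_eq_self_of_mul_self (ha : IsRegularInv a) (h : a⁻¹ * a = a * a⁻¹)
    (haa : a * a = a) : a⁻¹ * a = a := by
  calc a⁻¹ * a = a⁻¹ * a * a := by rw [mul_assoc, haa]
    _ = a := by rw [h, ha.mul_inv_mul]

end IsRegularInv

variable (s : Set M) (regular : ∀ a ∈ s, IsRegularInv a) (inv_mem : ∀ a ∈ s, a⁻¹ ∈ s)
  (mul_mem : ∀ a ∈ s, ∀ b ∈ s, a⁻¹ * a = b * b⁻¹ → a * b ∈ s)

noncomputable def composableMul (a b : s) : Option s := by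
  classical
  exact if h : (a : M)⁻¹ * a = b * (b : M)⁻¹ then some ⟨a * b, mul_mem a a.2 b b.2 h⟩ else none

variable {s} in
theorem composableMul_eq_some_iff {a b c : s} :
    composableMul s mul_mem a b = some c ↔ (a : M)⁻¹ * a = b * (b : M)⁻¹ ∧ (c : M) = a * b := by
  unfold composableMul
  split_ifs with h
  · simp [h, Subtype.ext_iff, eq_comm]
  · simp [h]

variable {s} in
theorem composableMul_isSome_iff {a b : s} :
    (composableMul s mul_mem a b).isSome ↔ (a : M)⁻¹ * a = b * (b : M)⁻¹ := by
  unfold composableMul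
  split_ifs with h <;> simp [h]

variable {s} in
theorem inv_mul_self_of_composableMul_self {a : s} (ha : IsRegularInv (a : M))
    (h : composableMul s mul_mem a a = some a) : (a : M)⁻¹ * a = a :=
  have ⟨hsrc, hval⟩ := (composableMul_eq_some_iff mul_mem).1 h
  ha.inv_mul_eq_self_of_mul_self hsrc hval.symm

noncomputable def PGroupoid.ofIsRegularInv : PGroupoid s where
  mul := composableMul s mul_mem
  inv a := ⟨a⁻¹, inv_mem a a.2⟩
  assoc a b c := by
    have hb := regular b b.2
    unfold composableMul
    by_cases hab : (a : M)⁻¹ * a = b * (b : M)⁻¹ <;> by_cases hbc : (b : M)⁻¹ * b = c * (c : M)⁻¹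
    · simp only [dif_pos hab, dif_pos hbc, Option.bind_some,
        dif_pos (hb.mul_inv_mul_self_of_inv_mul_eq hab ▸ hbc),
        dif_pos (hb.mul_mul_inv_self_of_inv_mul_eq hbc ▸ hab)]
      simp only [mul_assoc]
    · simp only [dif_pos hab, dif_neg hbc, Option.bind_some, Option.bind_none,
        dif_neg (hb.mul_inv_mul_self_of_inv_mul_eq hab ▸ hbc)]
    · simp only [dif_neg hab, dif_pos hbc, Option.bind_some, Option.bind_none,
        dif_neg (hb.mul_mul_inv_self_of_inv_mul_eq hbc ▸ hab)]
    · simp only [dif_neg hab, dif_neg hbc, Option.bind_none]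
  mul_inv_def a := (composableMul_isSome_iff mul_mem).2 (by simp)
  inv_mul_def a := (composableMul_isSome_iff mul_mem).2 (by simp)
  cancel_right a b c h := by
    obtain ⟨hab, hc⟩ := (composableMul_eq_some_iff mul_mem).1 h
    refine (composableMul_eq_some_iff mul_mem).2 ⟨?_, ?_⟩
    · rw [hc, (regular b b.2).mul_inv_mul_self_of_inv_mul_eq hab, inv_inv]
    · rw [hc, (regular a a.2).mul_mul_inv_of_inv_mul_eq hab]
  cancel_left a b c u h hu := by
    obtain ⟨hab, -⟩ := (composableMul_eq_some_iff mul_mem).1 h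
    obtain ⟨-, hu⟩ := (composableMul_eq_some_iff mul_mem).1 hu
    refine (composableMul_eq_some_iff mul_mem).2 ⟨?_, ?_⟩
    · rw [hu, (regular a a.2).mul_inv_mul_self_of_inv_mul_eq (by rw [inv_inv]), hab]
    · rw [hu, (regular b b.2).inv_mul_mul_of_inv_mul_eq hab]

end DivisionMonoid

section Cosets

variable {G : Type*} [Group G]

theorem smul_eq_singleton_mul (g : G) (s : Set G) : g • s = {g} * s := by
  rw [← Set.singleton_smul, smul_eq_mul]

theorem singleton_mul_inter_singleton_mul (x : G) (s t : Set G) :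
    ({x} * s) ∩ ({x} * t) = {x} * (s ∩ t) := by
  simp only [← smul_eq_singleton_mul, Set.smul_set_inter]

theorem mul_singleton_inter_mul_singleton (s t : Set G) (y : G) :
    (s * {y}) ∩ (t * {y}) = (s ∩ t) * {y} := by
  simp only [Set.mul_singleton]
  exact (Set.image_inter (mul_left_injective y)).symm

theorem one_mem_inv_mul_self {s : Set G} (hs : s.Nonempty) : (1 : G) ∈ s⁻¹ * s := by
  rw [Set.one_mem_inv_mul_iff, disjoint_self, Set.bot_eq_empty]
  exact hs.ne_empty

namespace Subgroup

variable (U : Subgroup G) (g h : G)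

theorem inv_mul_self_singleton_mul_coe : ({g} * (U : Set G))⁻¹ * ({g} * U) = U := by
  rw [mul_inv_rev, inv_coe_set, mul_assoc, (Set.isUnit_singleton g).inv_mul_cancel_left,
    coe_mul_coe]

theorem mul_inv_self_coe_mul_singleton : ((U : Set G) * {h}) * ((U : Set G) * {h})⁻¹ = U := by
  rw [mul_inv_rev, inv_coe_set, mul_assoc, (Set.isUnit_singleton h).mul_inv_cancel_left,
    coe_mul_coe]

theorem isRegularInv_singleton_mul_coe : IsRegularInv ({g} * (U : Set G)) := by
  rw [IsRegularInv, mul_assoc, inv_mul_self_singleton_mul_coe, mul_assoc, coe_mul_coe]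

theorem singleton_mul_coe_mul_coe_mul_singleton :
    ({g} * (U : Set G)) * ((U : Set G) * {h}) = {g} * U * {h} := by
  rw [mul_assoc, ← mul_assoc (U : Set G), coe_mul_coe, mul_assoc]

theorem coe_map_conj :
    ((U.map (MulAut.conj g).toMonoidHom : Subgroup G) : Set G) = {g} * U * {g}⁻¹ := by
  rw [coe_map, Set.inv_singleton, Set.singleton_mul, Set.mul_singleton, Set.image_image]
  rfl

end Subgroup

end Cosets

section CosetsOrEmpty

variable {G : Type*} [Group G] {S : Set (Subgroup G)} {A B : Set G}

variable (S) in
/-- The set `W(G)` of the paper. -/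
def cosetsOrEmpty : Set (Set G) := {A | A = ∅ ∨ ∃ g : G, ∃ U ∈ S, A = g • (U : Set G)}

theorem exists_eq_singleton_mul_of_mem_cosetsOrEmpty (hA : A ∈ cosetsOrEmpty S) {x : G}
    (hx : x ∈ A) : ∃ U ∈ S, A = {x} * (U : Set G) := by
  obtain rfl | ⟨g, U, hU, rfl⟩ := hA
  · exact absurd hx (Set.notMem_empty x)
  refine ⟨U, hU, ?_⟩
  rw [(leftCoset_eq_iff U).2 ((mem_leftCoset_iff g).1 hx), smul_eq_singleton_mul]

theorem isRegularInv_of_mem_cosetsOrEmpty (hA : A ∈ cosetsOrEmpty S) : IsRegularInv A := by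
  obtain rfl | ⟨x, hx⟩ := A.eq_empty_or_nonempty
  · simp [IsRegularInv]
  obtain ⟨U, -, rfl⟩ := exists_eq_singleton_mul_of_mem_cosetsOrEmpty hA hx
  exact U.isRegularInv_singleton_mul_coe x

theorem smul_mem_cosetsOrEmpty (hA : A ∈ cosetsOrEmpty S) (g : G) :
    g • A ∈ cosetsOrEmpty S := by
  obtain rfl | ⟨h, U, hU, rfl⟩ := hA
  · exact Or.inl Set.smul_set_empty
  · exact Or.inr ⟨g * h, U, hU, smul_smul g h _⟩

theorem inv_mem_cosetsOrEmpty
    (hconj : ∀ U ∈ S, ∀ g : G, Subgroup.map (MulAut.conj g).toMonoidHom U ∈ S)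
    (hA : A ∈ cosetsOrEmpty S) : A⁻¹ ∈ cosetsOrEmpty S := by
  obtain rfl | ⟨x, hx⟩ := A.eq_empty_or_nonempty
  · exact Or.inl Set.inv_empty
  obtain ⟨U, hU, rfl⟩ := exists_eq_singleton_mul_of_mem_cosetsOrEmpty hA hx
  refine Or.inr ⟨x⁻¹, _, hconj U hU x, ?_⟩
  rw [U.coe_map_conj, smul_eq_singleton_mul, ← Set.inv_singleton, mul_inv_rev, inv_coe_set,
    mul_assoc, (Set.isUnit_singleton x).inv_mul_cancel_left]

theorem mul_mem_cosetsOrEmpty : ∀ A ∈ cosetsOrEmpty S, ∀ B ∈ cosetsOrEmpty S,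
    A⁻¹ * A = B * B⁻¹ → A * B ∈ cosetsOrEmpty S := by
  intro A hA B hB h
  obtain rfl | ⟨x, hx⟩ := A.eq_empty_or_nonempty
  · exact Or.inl Set.empty_mul
  obtain ⟨U, -, rfl⟩ := exists_eq_singleton_mul_of_mem_cosetsOrEmpty hA hx
  rw [U.inv_mul_self_singleton_mul_coe] at h
  have hxB : {x} * (U : Set G) * B = x • B := by
    rw [mul_assoc, h, (isRegularInv_of_mem_cosetsOrEmpty hB).mul_inv_mul, smul_eq_singleton_mul]
  rw [hxB]
  exact smul_mem_cosetsOrEmpty hB x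

theorem inter_mem_cosetsOrEmpty (hinter : ∀ U ∈ S, ∀ V ∈ S, U ⊓ V ∈ S)
    (hA : A ∈ cosetsOrEmpty S) (hB : B ∈ cosetsOrEmpty S) : A ∩ B ∈ cosetsOrEmpty S := by
  obtain hAB | ⟨x, hxA, hxB⟩ := (A ∩ B).eq_empty_or_nonempty
  · exact Or.inl hAB
  obtain ⟨U, hU, rfl⟩ := exists_eq_singleton_mul_of_mem_cosetsOrEmpty hA hxA
  obtain ⟨V, hV, rfl⟩ := exists_eq_singleton_mul_of_mem_cosetsOrEmpty hB hxB
  refine Or.inr ⟨x, U ⊓ V, hinter U hU V hV, ?_⟩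
  rw [singleton_mul_inter_singleton_mul, Subgroup.coe_inf, smul_eq_singleton_mul]

theorem eq_coe_mul_singleton_of_mem_cosetsOrEmpty (hB : B ∈ cosetsOrEmpty S) {y : G}
    (hy : y ∈ B) {U : Subgroup G} (hU : (U : Set G) = B * B⁻¹) : B = (U : Set G) * {y} := by
  obtain ⟨V, -, rfl⟩ := exists_eq_singleton_mul_of_mem_cosetsOrEmpty hB hy
  rw [hU, mul_inv_rev, inv_coe_set, ← mul_assoc, (Set.isUnit_singleton y).inv_mul_cancel_right,
    mul_assoc, coe_mul_coe]

theorem inv_mul_eq_mul_inv_iff_of_mem_cosetsOrEmpty (hA : A ∈ cosetsOrEmpty S)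
    (hA' : A.Nonempty) (hB : B ∈ cosetsOrEmpty S) :
    A⁻¹ * A = B * B⁻¹ ↔
      ∃ U ∈ S, (∃ g : G, A = g • (U : Set G)) ∧ ∃ h : G, B = (U : Set G) * {h} := by
  constructor
  · intro h
    obtain ⟨x, hx⟩ := hA'
    obtain ⟨U, hU, rfl⟩ := exists_eq_singleton_mul_of_mem_cosetsOrEmpty hA hx
    rw [U.inv_mul_self_singleton_mul_coe] at h
    obtain ⟨y, hy⟩ : B.Nonempty := Set.Nonempty.of_mul_left (h ▸ OneMemClass.coe_nonempty U)
    exact ⟨U, hU, ⟨x, (smul_eq_singleton_mul x U).symm⟩, y,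
      eq_coe_mul_singleton_of_mem_cosetsOrEmpty hB hy h⟩
  · rintro ⟨U, -, ⟨g, rfl⟩, h, rfl⟩
    rw [smul_eq_singleton_mul, U.inv_mul_self_singleton_mul_coe,
      U.mul_inv_self_coe_mul_singleton]

theorem inter_mul_inter_of_mem_cosetsOrEmpty {A₀ A₁ B₀ B₁ : Set G}
    (hA₀ : A₀ ∈ cosetsOrEmpty S) (hA₁ : A₁ ∈ cosetsOrEmpty S)
    (hB₀ : B₀ ∈ cosetsOrEmpty S) (hB₁ : B₁ ∈ cosetsOrEmpty S)
    (h₀ : A₀⁻¹ * A₀ = B₀ * B₀⁻¹) (h₁ : A₁⁻¹ * A₁ = B₁ * B₁⁻¹)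
    (hA : (A₀ ∩ A₁).Nonempty) (hB : (B₀ ∩ B₁).Nonempty) :
    (A₀ ∩ A₁)⁻¹ * (A₀ ∩ A₁) = (B₀ ∩ B₁) * (B₀ ∩ B₁)⁻¹ ∧
      (A₀ * B₀) ∩ (A₁ * B₁) = (A₀ ∩ A₁) * (B₀ ∩ B₁) := by
  obtain ⟨x, hx₀, hx₁⟩ := hA
  obtain ⟨y, hy₀, hy₁⟩ := hB
  obtain ⟨U₀, -, rfl⟩ := exists_eq_singleton_mul_of_mem_cosetsOrEmpty hA₀ hx₀
  obtain ⟨U₁, -, rfl⟩ := exists_eq_singleton_mul_of_mem_cosetsOrEmpty hA₁ hx₁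
  rw [U₀.inv_mul_self_singleton_mul_coe] at h₀
  rw [U₁.inv_mul_self_singleton_mul_coe] at h₁
  rw [eq_coe_mul_singleton_of_mem_cosetsOrEmpty hB₀ hy₀ h₀,
    eq_coe_mul_singleton_of_mem_cosetsOrEmpty hB₁ hy₁ h₁,
    U₀.singleton_mul_coe_mul_coe_mul_singleton, U₁.singleton_mul_coe_mul_coe_mul_singleton,
    mul_singleton_inter_mul_singleton, mul_singleton_inter_mul_singleton,
    singleton_mul_inter_singleton_mul, ← Subgroup.coe_inf]
  exact ⟨by rw [Subgroup.inv_mul_self_singleton_mul_coe, Subgroup.mul_inv_self_coe_mul_singleton],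
    (Subgroup.singleton_mul_coe_mul_coe_mul_singleton _ _ _).symm⟩

end CosetsOrEmpty

section

variable {G : Type*} [Group G] {S : Set (Subgroup G)}

theorem mk_empty_ne_iff_nonempty {A : cosetsOrEmpty S} :
    A ≠ ⟨∅, Or.inl rfl⟩ ↔ (A : Set G).Nonempty := by
  rw [Set.nonempty_iff_ne_empty, Ne, Ne, Subtype.ext_iff]

variable (hconj : ∀ U ∈ S, ∀ g : G, Subgroup.map (MulAut.conj g).toMonoidHom U ∈ S)
  (hinter : ∀ U ∈ S, ∀ V ∈ S, U ⊓ V ∈ S)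

noncomputable def cosetMeetGroupoid : MeetGroupoid (cosetsOrEmpty S) :=
  { PGroupoid.ofIsRegularInv (cosetsOrEmpty S) (fun _ hA ↦ isRegularInv_of_mem_cosetsOrEmpty hA)
      (fun _ hA ↦ inv_mem_cosetsOrEmpty hconj hA)
      mul_mem_cosetsOrEmpty with
    meet A B := ⟨A ∩ B, inter_mem_cosetsOrEmpty hinter A.2 B.2⟩
    e := ⟨∅, Or.inl rfl⟩
    meet_comm A B := Subtype.ext (Set.inter_comm _ _)
    meet_assoc A B C := Subtype.ext (Set.inter_assoc _ _ _)
    meet_idem A := Subtype.ext (Set.inter_self _)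
    meet_e A := Subtype.ext (Set.empty_inter _)
    inv_e := Subtype.ext Set.inv_empty
    mul_e_e := (composableMul_eq_some_iff mul_mem_cosetsOrEmpty).2 ⟨by simp, by simp⟩
    e_mul A hA := by
      have hA' := mk_empty_ne_iff_nonempty.1 hA
      refine Option.not_isSome_iff_eq_none.1 fun h ↦ (hA'.mul hA'.inv).ne_empty ?_
      rw [← (composableMul_isSome_iff mul_mem_cosetsOrEmpty).1 h]
      exact Set.mul_empty
    mul_e A hA := by
      have hA' := mk_empty_ne_iff_nonempty.1 hA
      refine Option.not_isSome_iff_eq_none.1 fun h ↦ (hA'.inv.mul hA').ne_empty ?_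
      rw [(composableMul_isSome_iff mul_mem_cosetsOrEmpty).1 h]
      exact Set.empty_mul
    idem_meet_ne U V hU hV hUe hVe := by
      refine mk_empty_ne_iff_nonempty.2 ⟨1, ?_, ?_⟩
      · rw [← inv_mul_self_of_composableMul_self mul_mem_cosetsOrEmpty
          (isRegularInv_of_mem_cosetsOrEmpty U.2) hU]
        exact one_mem_inv_mul_self (mk_empty_ne_iff_nonempty.1 hUe)
      · rw [← inv_mul_self_of_composableMul_self mul_mem_cosetsOrEmpty
          (isRegularInv_of_mem_cosetsOrEmpty V.2) hV]
        exact one_mem_inv_mul_self (mk_empty_ne_iff_nonempty.1 hVe)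
    inv_le_iff A B := by
      simp only [Subtype.ext_iff]
      show (A : Set G) ∩ B = A ↔ (A : Set G)⁻¹ ∩ (B : Set G)⁻¹ = (A : Set G)⁻¹
      rw [Set.inter_eq_left, Set.inter_eq_left, Set.inv_subset_inv]
    meet_mul A₀ A₁ B₀ B₁ C₀ C₁ h₀ h₁ hA hB := by
      obtain ⟨hAB₀, hC₀⟩ := (composableMul_eq_some_iff mul_mem_cosetsOrEmpty).1 h₀
      obtain ⟨hAB₁, hC₁⟩ := (composableMul_eq_some_iff mul_mem_cosetsOrEmpty).1 h₁
      refine (composableMul_eq_some_iff mul_mem_cosetsOrEmpty).2 ?_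
      show _ ∧ (C₀ : Set G) ∩ C₁ = _
      rw [hC₀, hC₁]
      exact inter_mul_inter_of_mem_cosetsOrEmpty A₀.2 A₁.2 B₀.2 B₁.2 hAB₀ hAB₁
        (mk_empty_ne_iff_nonempty.1 hA) (mk_empty_ne_iff_nonempty.1 hB) }

theorem cosetMeetGroupoid_mul_eq_some_iff {A B C : cosetsOrEmpty S} :
    (cosetMeetGroupoid hconj hinter).mul A B = some C ↔
      (A : Set G)⁻¹ * A = B * (B : Set G)⁻¹ ∧ (C : Set G) = A * B :=
  composableMul_eq_some_iff mul_mem_cosetsOrEmpty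

theorem cosetMeetGroupoid_mul_isSome_iff {A B : cosetsOrEmpty S} :
    ((cosetMeetGroupoid hconj hinter).mul A B).isSome ↔ (A : Set G)⁻¹ * A = B * (B : Set G)⁻¹ :=
  composableMul_isSome_iff mul_mem_cosetsOrEmpty

end

theorem stmt8_general (G : Type*) [Group G]
    (S : Set (Subgroup G))
    (hconj : ∀ U ∈ S, ∀ g : G, Subgroup.map (MulAut.conj g).toMonoidHom U ∈ S)
    (hinter : ∀ U ∈ S, ∀ V ∈ S, U ⊓ V ∈ S) :
    ∃ mg : MeetGroupoid {A : Set G // A = ∅ ∨ ∃ g : G, ∃ U ∈ S, A = g • (U : Set G)},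
      mg.e = ⟨∅, Or.inl rfl⟩ ∧
      (∀ A, (mg.inv A : Set G) = (A : Set G)⁻¹) ∧
      (∀ A B, (mg.meet A B : Set G) = (A : Set G) ∩ (B : Set G)) ∧
      (∀ A B C, mg.mul A B = some C → (C : Set G) = (A : Set G) * (B : Set G)) ∧
      (∀ A B, A ≠ mg.e → B ≠ mg.e →
        ((mg.mul A B).isSome ↔ ∃ U ∈ S, (∃ g : G, (A : Set G) = g • (U : Set G)) ∧
          ∃ h : G, (B : Set G) = (U : Set G) * {h})) :=
  ⟨cosetMeetGroupoid hconj hinter, rfl, fun _ ↦ rfl, fun _ _ ↦ rfl,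
    fun _ _ _ h ↦ ((cosetMeetGroupoid_mul_eq_some_iff hconj hinter).1 h).2,
    fun A B hA _ ↦ (cosetMeetGroupoid_mul_isSome_iff hconj hinter).trans
      (inv_mul_eq_mul_inv_iff_of_mem_cosetsOrEmpty A.2
        ((mk_empty_ne_iff_nonempty (S := S)).1 hA) B.2)⟩

/-- For a topological group `G` with a family `S` of open subgroups closed under
conjugation and finite intersection and forming a neighbourhood basis of the identity,
the set `W(G)` of left cosets of subgroups in `S` together with `∅` — with product of a
left coset and a right coset of the same subgroup, setwise inverse, and intersection —
is a meet groupoid. -/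
theorem stmt8 (G : Type*) [Group G] [TopologicalSpace G] [IsTopologicalGroup G]
    (S : Set (Subgroup G))
    (hopen : ∀ U ∈ S, IsOpen (U : Set G))
    (hconj : ∀ U ∈ S, ∀ g : G, Subgroup.map (MulAut.conj g).toMonoidHom U ∈ S)
    (hinter : ∀ U ∈ S, ∀ V ∈ S, U ⊓ V ∈ S)
    (hbasis : (nhds (1 : G)).HasBasis (· ∈ S) (fun U => (U : Set G))) :
    ∃ mg : MeetGroupoid {A : Set G // A = ∅ ∨ ∃ g : G, ∃ U ∈ S, A = g • (U : Set G)},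
      mg.e = ⟨∅, Or.inl rfl⟩ ∧
      (∀ A, (mg.inv A : Set G) = (A : Set G)⁻¹) ∧
      (∀ A B, (mg.meet A B : Set G) = (A : Set G) ∩ (B : Set G)) ∧
      (∀ A B C, mg.mul A B = some C → (C : Set G) = (A : Set G) * (B : Set G)) ∧
      (∀ A B, A ≠ mg.e → B ≠ mg.e →
        ((mg.mul A B).isSome ↔ ∃ U ∈ S, (∃ g : G, (A : Set G) = g • (U : Set G)) ∧
          ∃ h : G, (B : Set G) = (U : Set G) * {h})) :=
  stmt8_general G S hconj hinter
end

section
/- Let G be a Polish group with a countable neighbourhood basis S_G of the identity consisting of open subgroups, invariant under conjugation, and let W(G) be the set of left cosets of subgroups in S_G together with ∅. Then the map g ↦ R_g := {gU : U ∈ S_G} is a bijection between G and the set of full filters on (W(G), ⊆), with inverse R ↦ the unique element of ⋂R. -/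
open Pointwise

/-- `R` is a full filter on the poset of left cosets of subgroups in `S` (with `∅`
excluded): every element of `R` is such a coset, `R` is downward directed and upward
closed within the coset poset, and `R` contains a left coset and a right coset of every
subgroup in `S`. -/
def IsFullFilter (G : Type*) [Group G] (S : Set (Subgroup G)) (R : Set (Set G)) : Prop :=
  (∀ A ∈ R, ∃ h : G, ∃ U ∈ S, A = h • (U : Set G)) ∧
  (∀ A ∈ R, ∀ B ∈ R, ∃ C ∈ R, C ⊆ A ∧ C ⊆ B) ∧
  (∀ A ∈ R, ∀ B : Set G, (∃ h : G, ∃ U ∈ S, B = h • (U : Set G)) → A ⊆ B → B ∈ R) ∧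
  (∀ U ∈ S, (∃ A ∈ R, ∃ h : G, A = h • (U : Set G)) ∧
    (∃ A ∈ R, ∃ h : G, A = (U : Set G) * {h}))

/-!
Proof idea. `R_g` is a full filter because a right coset `Ug` is the left coset
`g (g⁻¹Ug)` and `S` is closed under conjugation; `g` is recovered from `R_g` as the only point
of `⋂ R_g`, since `G` is T₁. Conversely, let `R` be a full filter and `U₀ ⊇ U₁ ⊇ ⋯` a
neighbourhood basis of `1` taken from `S`. Any two members of `R` meet, so points `xₙ` in the intersection of a left and a right
coset of `Uₙ` from `R` form a sequence that is Cauchy for both the left and the right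
uniformity. Such a sequence converges in a Polish group: on the space `∏ₙ G/Uₙ` of coset
threads, left translation by `xₘ` converges to a homeomorphism `φ`, and since `G`, being
completely metrizable, embeds there as a Gδ set, the Baire category theorem in the closure of
`G` yields `g` with `φ g ∈ G`, i.e.
`xₘ g` converges in `G`. Its limit lies in every (closed) member of `R`.
-/

open Set Filter Topology TopologicalSpace

theorem Topology.IsEmbedding.isGδ_range {X Y : Type*} [TopologicalSpace X]
    [IsCompletelyPseudoMetrizableSpace X] [TopologicalSpace Y] [MetrizableSpace Y]
    {f : X → Y} (hf : IsEmbedding f) : IsGδ (range f) := by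
  let _ := upgradeIsCompletelyPseudoMetrizable X
  let O : ℕ → Set Y := fun k =>
    ⋃₀ {V | IsOpen V ∧ ∀ a b, f a ∈ V → f b ∈ V → dist a b < 1 / (k + 1)}
  suffices h : range f = closure (range f) ∩ ⋂ k, O k by
    rw [h]
    exact isClosed_closure.isGδ.inter (.iInter fun k => (isOpen_sUnion fun V hV => hV.1).isGδ)
  refine (subset_inter subset_closure (subset_iInter fun k => ?_)).antisymm ?_
  · rintro _ ⟨x, rfl⟩
    have hball : Metric.ball x (1 / (k + 1) / 2) ∈ comap f (𝓝 (f x)) := by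
      rw [← hf.isInducing.nhds_eq_comap]; exact Metric.ball_mem_nhds x (by positivity)
    obtain ⟨V, hV, hVball⟩ := hball
    obtain ⟨V', hV'V, hV'o, hxV'⟩ := mem_nhds_iff.1 hV
    refine ⟨V', ⟨hV'o, fun a b ha hb => ?_⟩, hxV'⟩
    have ha' := hVball (hV'V ha)
    have hb' := hVball (hV'V hb)
    rw [Metric.mem_ball] at ha' hb'
    calc dist a b ≤ dist a x + dist b x := dist_triangle_right a b x
      _ < 1 / (k + 1) / 2 + 1 / (k + 1) / 2 := add_lt_add ha' hb'
      _ = 1 / (k + 1) := by ring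
  · rintro y ⟨hy, hyO⟩
    choose V hV hyV using fun k => mem_sUnion.1 (mem_iInter.1 hyO k)
    obtain ⟨s, hs⟩ := (𝓝 y).exists_antitone_basis
    have hN : ∀ k, ∃ a, f a ∈ s k ∩ ⋂ j ∈ Finset.range (k + 1), V j := fun k => by
      have hmem : s k ∩ ⋂ j ∈ Finset.range (k + 1), V j ∈ 𝓝 y :=
        inter_mem (hs.mem k) ((Finset.range (k + 1)).iInter_mem_sets.2 fun j _ =>
          (hV j).1.mem_nhds (hyV j))
      obtain ⟨_, h, a, rfl⟩ := mem_closure_iff_nhds.1 hy _ hmem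
      exact ⟨a, h⟩
    choose a ha using hN
    have hmem : ∀ j k, j ≤ k → f (a k) ∈ V j := fun j k hjk =>
      mem_iInter₂.1 (ha k).2 j (Finset.mem_range.2 (Nat.lt_succ_of_le hjk))
    have hcauchy : CauchySeq a := by
      refine Metric.cauchySeq_iff'.2 fun ε hε => ?_
      obtain ⟨j, hj⟩ := exists_nat_one_div_lt hε
      exact ⟨j, fun k hk => ((hV j).2 _ _ (hmem j k hk) (hmem j j le_rfl)).trans hj⟩
    obtain ⟨x, hx⟩ := cauchySeq_tendsto_of_complete hcauchy
    have hfa : Tendsto (f ∘ a) atTop (𝓝 y) := hs.tendsto fun k => (ha k).1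
    exact ⟨x, tendsto_nhds_unique ((hf.continuous.tendsto x).comp hx) hfa⟩

theorem Homeomorph.exists_mem_and_apply_mem {Z : Type*} [TopologicalSpace Z]
    [IsCompletelyPseudoMetrizableSpace Z] {A : Set Z} (hA : IsGδ A) (hne : A.Nonempty)
    (φ : Z ≃ₜ Z) (hφ : MapsTo φ A (closure A)) (hφ' : MapsTo φ.symm A (closure A)) :
    ∃ a ∈ A, φ a ∈ A := by
  have hmaps : ∀ {ψ : Z ≃ₜ Z}, MapsTo ψ A (closure A) → MapsTo ψ (closure A) (closure A) :=
    fun h => closure_minimal h.subset_preimage (isClosed_closure.preimage (Homeomorph.continuous _))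
  have hiff : ∀ z, z ∈ closure A ↔ φ z ∈ closure A := fun z =>
    ⟨fun h => hmaps hφ h, fun h => by simpa using hmaps hφ' h⟩
  have := (isClosed_closure (s := A)).isCompletelyPseudoMetrizableSpace
  have : Nonempty (closure A) := ⟨⟨_, subset_closure hne.some_mem⟩⟩
  let φA : closure A ≃ₜ closure A := φ.subtype hiff
  let A' : Set (closure A) := (↑) ⁻¹' A
  have hA' : IsGδ A' := hA.preimage continuous_subtype_val
  have hdense : Dense A' :=
    Subtype.dense_iff.2 <| closure_mono fun a ha => ⟨⟨a, subset_closure ha⟩, ha, rfl⟩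
  obtain ⟨a, ha, hφa⟩ := (hdense.inter_of_Gδ hA' (hA'.preimage φA.continuous)
    (hdense.preimage φA.isOpenMap)).nonempty
  exact ⟨a, ha, hφa⟩

section Cosets

variable {G : Type*} [Group G]

lemma mem_mul_singleton_iff {H : Subgroup G} {a p : G} :
    p ∈ (H : Set G) * {a} ↔ p * a⁻¹ ∈ H := by
  rw [Set.mul_singleton, Set.image_mul_right]; rfl

lemma smul_eq_smul_of_mem {H : Subgroup G} {a p : G} (hp : p ∈ a • (H : Set G)) :
    a • (H : Set G) = p • (H : Set G) :=
  (leftCoset_eq_iff H).2 ((mem_leftCoset_iff a).1 hp)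

lemma smul_subset_smul_of_inter_nonempty {H K : Subgroup G} (hHK : H ≤ K) {a b : G}
    (h : (a • (H : Set G) ∩ b • (K : Set G)).Nonempty) : a • (H : Set G) ⊆ b • (K : Set G) := by
  obtain ⟨w, hwa, hwb⟩ := h
  intro p hp
  rw [mem_leftCoset_iff] at hwa hwb hp ⊢
  simpa [mul_assoc] using K.mul_mem (K.mul_mem hwb (hHK (inv_mem hwa))) (hHK hp)

lemma mul_singleton_subset_of_inter_nonempty {H K : Subgroup G} (hHK : H ≤ K) {a b : G}
    (h : (((H : Set G) * {a}) ∩ ((K : Set G) * {b})).Nonempty) :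
    (H : Set G) * {a} ⊆ (K : Set G) * {b} := by
  obtain ⟨w, hwa, hwb⟩ := h
  intro p hp
  rw [mem_mul_singleton_iff] at hwa hwb hp ⊢
  simpa [mul_assoc] using K.mul_mem (K.mul_mem (hHK hp) (hHK (inv_mem hwa))) hwb

lemma inv_mul_mem_of_mem_smul {H : Subgroup G} {a p q : G} (hp : p ∈ a • (H : Set G))
    (hq : q ∈ a • (H : Set G)) : p⁻¹ * q ∈ H := by
  rw [mem_leftCoset_iff] at hp hq
  simpa [mul_assoc] using H.mul_mem (inv_mem hp) hq

lemma mul_inv_mem_of_mem_mul_singleton {H : Subgroup G} {a p q : G}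
    (hp : p ∈ (H : Set G) * {a}) (hq : q ∈ (H : Set G) * {a}) : p * q⁻¹ ∈ H := by
  rw [mem_mul_singleton_iff] at hp hq
  simpa [mul_assoc] using H.mul_mem hp (inv_mem hq)

lemma mul_singleton_eq_smul_map_conj (g : G) (H : Subgroup G) :
    (H : Set G) * {g} = g • (H.map (MulAut.conj g⁻¹).toMonoidHom : Set G) := by
  ext p
  rw [mem_mul_singleton_iff, mem_leftCoset_iff, SetLike.mem_coe, Subgroup.mem_map_equiv]
  simp

def toCosets (U : ℕ → Subgroup G) (g : G) : ∀ n, G ⧸ U n := fun _ => g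

end Cosets

section TwoSidedCauchy

variable {G : Type*} [Group G] [TopologicalSpace G] [IsTopologicalGroup G] {U : ℕ → Subgroup G}

lemma isEmbedding_toCosets [T0Space G]
    (hU : (𝓝 (1 : G)).HasBasis (fun _ => True) fun n => (U n : Set G)) :
    IsEmbedding (toCosets U) := by
  have := fun n => QuotientGroup.discreteTopology
    (Subgroup.isOpen_of_mem_nhds (U n) (hU.mem_of_mem trivial))
  have hcont : Continuous (toCosets U) := continuous_pi fun n => QuotientGroup.continuous_mk
  refine IsInducing.isEmbedding (isInducing_iff_nhds.2 fun g => ?_)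
  refine le_antisymm (hcont.tendsto g).le_comap fun V hV => ?_
  rw [← map_mul_left_nhds_one] at hV
  obtain ⟨n, -, hn⟩ := hU.mem_iff.1 hV
  refine ⟨(· n) ⁻¹' {(g : G ⧸ U n)},
    ((isOpen_discrete _).preimage (continuous_apply n)).mem_nhds rfl, fun y hy => ?_⟩
  simpa using hn (QuotientGroup.eq.1 (Eq.symm hy : (g : G ⧸ U n) = y))

lemma exists_eventually_smul_eq
    (hU : (𝓝 (1 : G)).HasBasis (fun _ => True) fun n => (U n : Set G)) {y : ℕ → G}
    (hy : ∀ n m, n ≤ m → (y m)⁻¹ * y n ∈ U n) (n : ℕ) (q : G ⧸ U n) :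
    ∃ q', ∀ᶠ m in atTop, y m • q = q' := by
  obtain ⟨g, rfl⟩ := QuotientGroup.mk_surjective q
  have hconj : ∀ᶠ u in 𝓝 (1 : G), g⁻¹ * u * g ∈ U n := by
    have : Continuous fun u : G => g⁻¹ * u * g := by fun_prop
    exact this.tendsto' 1 1 (by group) (hU.mem_of_mem trivial)
  obtain ⟨M, -, hM⟩ := hU.eventually_iff.1 hconj
  refine ⟨y M • (g : G ⧸ U n), eventually_atTop.2 ⟨M, fun m hm => QuotientGroup.eq.2 ?_⟩⟩
  simpa [mul_assoc] using hM (hy M m hm)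

lemma exists_homeomorph_tendsto_smul
    (hU : (𝓝 (1 : G)).HasBasis (fun _ => True) fun n => (U n : Set G)) {x : ℕ → G}
    (hL : ∀ n m, n ≤ m → (x m)⁻¹ * x n ∈ U n) (hR : ∀ n m, n ≤ m → x m * (x n)⁻¹ ∈ U n) :
    ∃ φ : (∀ n, G ⧸ U n) ≃ₜ (∀ n, G ⧸ U n), ∀ c,
      Tendsto (fun m => x m • c) atTop (𝓝 (φ c)) ∧
      Tendsto (fun m => (x m)⁻¹ • c) atTop (𝓝 (φ.symm c)) := by
  have := fun n => QuotientGroup.discreteTopology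
    (Subgroup.isOpen_of_mem_nhds (U n) (hU.mem_of_mem trivial))
  choose f hf using exists_eventually_smul_eq hU hL
  choose f' hf' using exists_eventually_smul_eq hU (y := fun m => (x m)⁻¹) (by simpa using hR)
  have hinv : ∀ n q, f' n (f n q) = q ∧ f n (f' n q) = q := fun n q => by
    obtain ⟨m, h₁, h₂, h₃, h₄⟩ :=
      ((hf n q).and ((hf' n (f n q)).and ((hf' n q).and (hf n (f' n q))))).exists
    exact ⟨by rw [← h₂, ← h₁, inv_smul_smul], by rw [← h₄, ← h₃, smul_inv_smul]⟩
  let e : ∀ n, G ⧸ U n ≃ G ⧸ U n := fun n =>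
    ⟨f n, f' n, fun q => (hinv n q).1, fun q => (hinv n q).2⟩
  refine ⟨Homeomorph.piCongrRight fun n => (e n).toHomeomorphOfDiscrete, fun c => ⟨?_, ?_⟩⟩
  · exact tendsto_pi_nhds.2 fun n => by rw [nhds_discrete, tendsto_pure]; exact hf n (c n)
  · exact tendsto_pi_nhds.2 fun n => by rw [nhds_discrete, tendsto_pure]; exact hf' n (c n)

theorem exists_tendsto_of_inv_mul_mem_of_mul_inv_mem [IsCompletelyMetrizableSpace G]
    (hU : (𝓝 (1 : G)).HasBasis (fun _ => True) fun n => (U n : Set G)) {x : ℕ → G}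
    (hL : ∀ n m, n ≤ m → (x m)⁻¹ * x n ∈ U n) (hR : ∀ n m, n ≤ m → x m * (x n)⁻¹ ∈ U n) :
    ∃ z, Tendsto x atTop (𝓝 z) := by
  have := fun n => QuotientGroup.discreteTopology
    (Subgroup.isOpen_of_mem_nhds (U n) (hU.mem_of_mem trivial))
  have hι := isEmbedding_toCosets hU
  obtain ⟨φ, hφ⟩ := exists_homeomorph_tendsto_smul hU hL hR
  obtain ⟨_, ⟨g, rfl⟩, h, hh⟩ := φ.exists_mem_and_apply_mem hι.isGδ_range (range_nonempty _)
    (by rintro _ ⟨g, rfl⟩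
        exact mem_closure_of_tendsto (hφ _).1 (.of_forall fun m => ⟨x m * g, rfl⟩))
    (by rintro _ ⟨g, rfl⟩
        exact mem_closure_of_tendsto (hφ _).2 (.of_forall fun m => ⟨(x m)⁻¹ * g, rfl⟩))
  have hxg : Tendsto (fun m => x m * g) atTop (𝓝 h) :=
    hι.isInducing.tendsto_nhds_iff.2 (hh ▸ (hφ _).1)
  exact ⟨h * g⁻¹, by simpa using hxg.mul_const g⁻¹⟩

end TwoSidedCauchy

namespace IsFullFilter

variable {G : Type*} [Group G] {S : Set (Subgroup G)} {R : Set (Set G)}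

lemma nonempty_of_mem (hR : IsFullFilter G S R) {A : Set G} (hA : A ∈ R) : A.Nonempty := by
  obtain ⟨a, U, -, rfl⟩ := hR.1 A hA
  exact ⟨a, (mem_leftCoset_iff a).2 (by simp)⟩

lemma inter_nonempty (hR : IsFullFilter G S R) {A B : Set G} (hA : A ∈ R) (hB : B ∈ R) :
    (A ∩ B).Nonempty := by
  obtain ⟨C, hC, hCA, hCB⟩ := hR.2.1 A hA B hB
  exact (hR.nonempty_of_mem hC).mono (subset_inter hCA hCB)

lemma exists_smul_mem (hR : IsFullFilter G S R) {U : Subgroup G} (hU : U ∈ S) :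
    ∃ a : G, a • (U : Set G) ∈ R := by
  obtain ⟨_, hA, a, rfl⟩ := (hR.2.2.2 U hU).1
  exact ⟨a, hA⟩

lemma exists_mul_singleton_mem (hR : IsFullFilter G S R) {U : Subgroup G} (hU : U ∈ S) :
    ∃ b : G, (U : Set G) * {b} ∈ R := by
  obtain ⟨_, hA, b, rfl⟩ := (hR.2.2.2 U hU).2
  exact ⟨b, hA⟩

lemma eq_setOf_smul_of_mem_sInter (hR : IsFullFilter G S R) {z : G} (hz : z ∈ ⋂₀ R) :
    R = {A | ∃ U ∈ S, A = z • (U : Set G)} := by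
  ext A
  constructor
  · intro hA
    obtain ⟨a, U, hU, rfl⟩ := hR.1 A hA
    exact ⟨U, hU, smul_eq_smul_of_mem (hz _ hA)⟩
  · rintro ⟨U, hU, rfl⟩
    obtain ⟨A, hA, a, rfl⟩ := (hR.2.2.2 U hU).1
    rwa [← smul_eq_smul_of_mem (hz _ hA)]

lemma sInter_nonempty [TopologicalSpace G] [IsTopologicalGroup G]
    [IsCompletelyMetrizableSpace G] (hbasis : (𝓝 (1 : G)).HasBasis (· ∈ S) fun U => (U : Set G))
    (hR : IsFullFilter G S R) : (⋂₀ R).Nonempty := by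
  obtain ⟨U, hUS, hU⟩ := hbasis.exists_antitone_subbasis
  choose a ha using fun n => hR.exists_smul_mem (hUS n)
  choose b hb using fun n => hR.exists_mul_singleton_mem (hUS n)
  choose x hxa hxb using fun n => hR.inter_nonempty (ha n) (hb n)
  have hxa' : ∀ n m, n ≤ m → x m ∈ a n • (U n : Set G) := fun n m h =>
    smul_subset_smul_of_inter_nonempty (hU.antitone h) (hR.inter_nonempty (ha m) (ha n)) (hxa m)
  have hxb' : ∀ n m, n ≤ m → x m ∈ (U n : Set G) * {b n} := fun n m h =>
    mul_singleton_subset_of_inter_nonempty (hU.antitone h) (hR.inter_nonempty (hb m) (hb n))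
      (hxb m)
  obtain ⟨z, hz⟩ := exists_tendsto_of_inv_mul_mem_of_mul_inv_mem hU.toHasBasis
    (fun n m h => inv_mul_mem_of_mem_smul (hxa' n m h) (hxa n))
    (fun n m h => mul_inv_mem_of_mem_mul_singleton (hxb' n m h) (hxb n))
  refine ⟨z, fun A hA => ?_⟩
  obtain ⟨c, V, hV, rfl⟩ := hR.1 A hA
  have hVnhds := hbasis.mem_of_mem hV
  obtain ⟨n, -, hn⟩ := hU.toHasBasis.mem_iff.1 hVnhds
  have hclosed : IsClosed (c • (V : Set G)) :=
    (V.isClosed_of_isOpen (V.isOpen_of_mem_nhds hVnhds)).smul c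
  refine hclosed.mem_of_tendsto hz (eventually_atTop.2 ⟨n, fun m hm => ?_⟩)
  exact smul_subset_smul_of_inter_nonempty ((hU.antitone hm).trans hn)
    (hR.inter_nonempty (ha m) hA) (hxa m)

end IsFullFilter

section NeighbourhoodBasis

variable {G : Type*} [Group G] [TopologicalSpace G] {S : Set (Subgroup G)}

lemma sInter_setOf_smul [T1Space G]
    (hbasis : (𝓝 (1 : G)).HasBasis (· ∈ S) fun U => (U : Set G)) (g : G) :
    ⋂₀ {A | ∃ U ∈ S, A = g • (U : Set G)} = {g} := by
  have hker : ⋂ U ∈ S, (U : Set G) = {1} := hbasis.ker.symm.trans (ker_nhds 1)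
  ext y
  have hmem : y ∈ ⋂₀ {A | ∃ U ∈ S, A = g • (U : Set G)} ↔ g⁻¹ * y ∈ ⋂ U ∈ S, (U : Set G) := by
    simp [forall_comm (α := Set G), mem_leftCoset_iff]
  rw [hmem, hker, mem_singleton_iff, inv_mul_eq_one, eq_comm, mem_singleton_iff]

lemma isFullFilter_setOf_smul (hbasis : (𝓝 (1 : G)).HasBasis (· ∈ S) fun U => (U : Set G))
    (hconj : ∀ U ∈ S, ∀ g : G, U.map (MulAut.conj g).toMonoidHom ∈ S) (g : G) :
    IsFullFilter G S {A | ∃ U ∈ S, A = g • (U : Set G)} := by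
  refine ⟨?_, ?_, ?_, fun U hU => ⟨⟨_, ⟨U, hU, rfl⟩, g, rfl⟩, ?_⟩⟩
  · rintro _ ⟨U, hU, rfl⟩
    exact ⟨g, U, hU, rfl⟩
  · rintro _ ⟨U, hU, rfl⟩ _ ⟨V, hV, rfl⟩
    obtain ⟨W, hW, hWUV⟩ :=
      hbasis.mem_iff.1 (inter_mem (hbasis.mem_of_mem hU) (hbasis.mem_of_mem hV))
    exact ⟨_, ⟨W, hW, rfl⟩, smul_set_mono (hWUV.trans inter_subset_left),
      smul_set_mono (hWUV.trans inter_subset_right)⟩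
  · rintro _ ⟨U, hU, rfl⟩ _ ⟨h, V, hV, rfl⟩ hUV
    exact ⟨V, hV, smul_eq_smul_of_mem (hUV ((mem_leftCoset_iff g).2 (by simp)))⟩
  · exact ⟨_, ⟨_, hconj U hU g⁻¹, rfl⟩, g, (mul_singleton_eq_smul_map_conj g U).symm⟩

end NeighbourhoodBasis

theorem stmt10_general (G : Type*) [Group G] [TopologicalSpace G] [IsTopologicalGroup G]
    [PolishSpace G]
    (S : Set (Subgroup G))
    (hbasis : (nhds (1 : G)).HasBasis (· ∈ S) (fun U => (U : Set G)))
    (hconj : ∀ U ∈ S, ∀ g : G, Subgroup.map (MulAut.conj g).toMonoidHom U ∈ S) :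
    (∀ g : G, IsFullFilter G S {A : Set G | ∃ U ∈ S, A = g • (U : Set G)}) ∧
    Function.Injective (fun g : G => {A : Set G | ∃ U ∈ S, A = g • (U : Set G)}) ∧
    (∀ R : Set (Set G), IsFullFilter G S R →
      ∃ g : G, R = {A : Set G | ∃ U ∈ S, A = g • (U : Set G)} ∧ ⋂₀ R = {g}) := by
  refine ⟨isFullFilter_setOf_smul hbasis hconj, fun g h hgh => ?_, fun R hR => ?_⟩
  · simpa [sInter_setOf_smul hbasis] using congrArg sInter hgh
  · obtain ⟨z, hz⟩ := hR.sInter_nonempty hbasis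
    have hRz := hR.eq_setOf_smul_of_mem_sInter hz
    exact ⟨z, hRz, hRz ▸ sInter_setOf_smul hbasis z⟩

/-- For a Polish group `G` with a countable conjugation-invariant neighbourhood basis `S`
of the identity consisting of open subgroups, the map `g ↦ R_g = {gU : U ∈ S}` is a
bijection between `G` and the full filters on the coset poset, with inverse
`R ↦ the unique element of ⋂ R`. -/
theorem stmt10 (G : Type*) [Group G] [TopologicalSpace G] [IsTopologicalGroup G]
    [PolishSpace G]
    (S : Set (Subgroup G)) (hcount : S.Countable)
    (hopen : ∀ U ∈ S, IsOpen (U : Set G))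
    (hbasis : (nhds (1 : G)).HasBasis (· ∈ S) (fun U => (U : Set G)))
    (hconj : ∀ U ∈ S, ∀ g : G, Subgroup.map (MulAut.conj g).toMonoidHom U ∈ S) :
    (∀ g : G, IsFullFilter G S {A : Set G | ∃ U ∈ S, A = g • (U : Set G)}) ∧
    Function.Injective (fun g : G => {A : Set G | ∃ U ∈ S, A = g • (U : Set G)}) ∧
    (∀ R : Set (Set G), IsFullFilter G S R →
      ∃ g : G, R = {A : Set G | ∃ U ∈ S, A = g • (U : Set G)} ∧ ⋂₀ R = {g}) :=
  stmt10_general G S hbasis hconj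
end

section
/- Let G be a Polish group with a countable neighbourhood basis S_G of the identity consisting of open subgroups, invariant under Aut(G), and suppose Aut(G) carries a Polish group topology with neighbourhood basis of the identity given by subgroups {Φ ∈ Aut(G) : Φ(A₁)=A₁, …, Φ(Aₙ)=Aₙ} for cosets Aᵢ of subgroups in S_G. Then the natural map Φ : G/Z(G) → Aut(G), sending g to conjugation by g, is continuous and injective; consequently Inn(G) is a Borel subgroup of Aut(G). -/
/-!
Conjugation `g ↦ conj g` is continuous at `1`: a basic neighbourhood of the identity in `Aut(G)`
only asks to fix finitely many cosets `gU` with `U` open, and `gU` is fixed by conjugation by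
any `h` in the open neighbourhood `U ∩ gUg⁻¹` of `1`. Its kernel is `Z(G)`, so it descends to a
continuous injection `G/Z(G) → Aut(G)`.

Lusin–Souslin needs a Polish domain, and rather than showing that `G/Z(G)` is Polish we find a
Borel transversal of the cosets. In a complete metric for `G`, choose greedily from a dense
sequence centres of nested balls of radii `2⁻ⁿ` all meeting a given closed set `C`; their limit
lies in `C` and depends only on `C`. Applied to the cosets `xZ(G)` this gives a selector that is
Borel, since each choice only depends on which open sets the coset meets, and conjugation is
injective on its Borel set of fixed points, whose image is `Inn(G)`.
-/

open Pointwise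


/-- The group `Aut(G)` of bi-continuous automorphisms of a topological group `G`,
as a subgroup of `MulAut G`. -/
def contAut (G : Type u) [Group G] [TopologicalSpace G] : Subgroup (MulAut G) where
  carrier := {f : MulAut G | Continuous f ∧ Continuous f.symm}
  one_mem' := ⟨continuous_id, continuous_id⟩
  mul_mem' := by
    rintro a b ⟨ha1, ha2⟩ ⟨hb1, hb2⟩
    exact ⟨ha1.comp hb1, hb2.comp ha2⟩
  inv_mem' := by
    rintro a ⟨ha1, ha2⟩
    exact ⟨ha2, ha1⟩

/-- The inner automorphism given by conjugation by `g`, as an element of `Aut(G)`. -/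
def conjAut (G : Type u) [Group G] [TopologicalSpace G] [IsTopologicalGroup G] (g : G) :
    ↥(contAut G) :=
  ⟨MulAut.conj g,
    (continuous_const.mul continuous_id).mul continuous_const,
    (continuous_const.mul continuous_id).mul continuous_const⟩

open Filter Metric Set Topology

theorem measurable_sInf_setOf {α : Type*} [MeasurableSpace α] {p : α → ℕ → Prop}
    (hp : ∀ k, MeasurableSet {a | p a k}) : Measurable fun a => sInf {k | p a k} := by
  classical
  have hex : ∀ a, ∃ k, p a k ∨ ∀ j, ¬p a j := fun a => by
    by_cases h : ∃ j, p a j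
    · exact h.imp fun _ => Or.inl
    · exact ⟨0, Or.inr (not_exists.1 h)⟩
  have hnone : MeasurableSet {a | ∀ j, ¬p a j} := by
    rw [show {a | ∀ j, ¬p a j} = ⋂ j, {a | p a j}ᶜ by ext; simp]
    exact .iInter fun j => (hp j).compl
  convert measurable_find hex fun k => (hp k).union hnone using 2 with a
  by_cases h : ∃ j, p a j
  · rw [Nat.sInf_def (s := {k | p a k}) h]
    refine le_antisymm (Nat.find_mono fun k hk => ?_) (Nat.find_mono fun k hk => Or.inl hk)
    exact hk.resolve_right fun hn => not_exists.2 hn h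
  · rw [show {k | p a k} = ∅ from eq_empty_of_forall_notMem (not_exists.1 h),
      Nat.sInf_empty, eq_comm, Nat.find_eq_zero]
    exact Or.inr (not_exists.1 h)

theorem measurable_comp_of_countable_cases {α β γ : Type*} [MeasurableSpace α] [MeasurableSpace γ]
    [Countable β] {g : α → β} (hg : ∀ b, MeasurableSet {a | g a = b}) {f : β → α → γ}
    (hf : ∀ b, Measurable (f b)) : Measurable fun a => f (g a) a := by
  intro s hs
  have : (fun a => f (g a) a) ⁻¹' s = ⋃ b, {a | g a = b} ∩ f b ⁻¹' s := by
    ext a; simp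
  rw [this]
  exact .iUnion fun b => (hg b).inter (hf b hs)

namespace NestedBallSelection

variable {X : Type*} [MetricSpace X] (q : ℕ → X)

noncomputable def firstNear (C : Set X) (ε : ℝ) : ℕ :=
  sInf {k | (C ∩ ball (q k) ε).Nonempty}

/-- The list `[kₙ₋₁, …, k₀]` stands for `⋂ i < n, ball (q kᵢ) 2⁻ⁱ`; lists, rather than the sets
themselves, keep the choices countable for the measurability argument. -/
def ballChain : List ℕ → Set X
  | [] => univ
  | k :: l => ballChain l ∩ ball (q k) ((1 / 2) ^ l.length)

noncomputable def trail (C : Set X) : ℕ → List ℕ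
  | 0 => []
  | n + 1 => firstNear q (C ∩ ballChain q (trail C n)) ((1 / 2) ^ n) :: trail C n

noncomputable def approx (C : Set X) (n : ℕ) : X :=
  q (firstNear q (C ∩ ballChain q (trail q C n)) ((1 / 2) ^ n))

noncomputable def select (C : Set X) : X :=
  haveI : Nonempty X := ⟨q 0⟩
  limUnder atTop (approx q C)

variable {q}

theorem firstNear_spec (hq : DenseRange q) {C : Set X} (hC : C.Nonempty) {ε : ℝ} (hε : 0 < ε) :
    (C ∩ ball (q (firstNear q C ε)) ε).Nonempty := by
  obtain ⟨c, hc⟩ := hC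
  obtain ⟨k, hk⟩ := Metric.denseRange_iff.1 hq c ε hε
  exact Nat.sInf_mem (s := {k | (C ∩ ball (q k) ε).Nonempty}) ⟨k, c, hc, mem_ball.2 hk⟩

theorem isOpen_ballChain : ∀ l : List ℕ, IsOpen (ballChain q l)
  | [] => isOpen_univ
  | _ :: l => (isOpen_ballChain l).inter isOpen_ball

theorem length_trail (C : Set X) : ∀ n, (trail q C n).length = n
  | 0 => rfl
  | n + 1 => congrArg (· + 1) (length_trail C n)

theorem ballChain_trail_succ (C : Set X) (n : ℕ) :
    ballChain q (trail q C (n + 1)) =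
      ballChain q (trail q C n) ∩ ball (approx q C n) ((1 / 2) ^ n) := by
  rw [trail, ballChain, length_trail, approx]

theorem inter_ballChain_trail_nonempty (hq : DenseRange q) {C : Set X} (hC : C.Nonempty) :
    ∀ n, (C ∩ ballChain q (trail q C n)).Nonempty
  | 0 => by simpa [trail, ballChain] using hC
  | n + 1 => by
    rw [ballChain_trail_succ, ← inter_assoc]
    exact firstNear_spec hq (inter_ballChain_trail_nonempty hq hC n) (by positivity)

theorem dist_approx_succ_le (hq : DenseRange q) {C : Set X} (hC : C.Nonempty) (n : ℕ) :
    dist (approx q C n) (approx q C (n + 1)) ≤ 2 * (1 / 2) ^ n := by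
  obtain ⟨p, -, hp⟩ := inter_ballChain_trail_nonempty hq hC (n + 2)
  rw [ballChain_trail_succ, ballChain_trail_succ] at hp
  obtain ⟨⟨-, hpn⟩, hpn'⟩ := hp
  rw [mem_ball'] at hpn
  rw [mem_ball] at hpn'
  calc dist (approx q C n) (approx q C (n + 1))
      ≤ dist (approx q C n) p + dist p (approx q C (n + 1)) := dist_triangle _ _ _
    _ ≤ (1 / 2) ^ n + (1 / 2) ^ n := by
        gcongr
        exact hpn'.le.trans (pow_le_pow_of_le_one (by norm_num) (by norm_num) n.le_succ)
    _ = 2 * (1 / 2) ^ n := by ring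

theorem tendsto_approx_select [CompleteSpace X] (hq : DenseRange q) {C : Set X}
    (hC : C.Nonempty) : Tendsto (approx q C) atTop (𝓝 (select q C)) :=
  (cauchySeq_of_le_geometric _ _ (by norm_num) (dist_approx_succ_le hq hC)).tendsto_limUnder

theorem select_mem [CompleteSpace X] (hq : DenseRange q) {C : Set X} (hC : IsClosed C)
    (hne : C.Nonempty) : select q C ∈ C := by
  choose p hpC hp using fun n => inter_ballChain_trail_nonempty hq hne (n + 1)
  have hdist : Tendsto (fun n => dist (approx q C n) (p n)) atTop (𝓝 0) := by
    refine squeeze_zero (fun _ => dist_nonneg) (fun n => ?_)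
      (tendsto_pow_atTop_nhds_zero_of_lt_one (by norm_num) (by norm_num : (1 / 2 : ℝ) < 1))
    have hpn := hp n
    rw [ballChain_trail_succ] at hpn
    exact (mem_ball'.1 hpn.2).le
  exact hC.mem_of_tendsto (tendsto_of_tendsto_of_dist (tendsto_approx_select hq hne) hdist)
    (.of_forall hpC)

section Measurable

variable {α : Type*} [MeasurableSpace α] {C : α → Set X}
  (hC : ∀ W : Set X, IsOpen W → MeasurableSet {a | (C a ∩ W).Nonempty})
include hC

theorem measurable_firstNear {W : Set X} (hW : IsOpen W) (ε : ℝ) :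
    Measurable fun a => firstNear q (C a ∩ W) ε :=
  measurable_sInf_setOf fun k => by
    simpa only [inter_assoc] using hC _ (hW.inter isOpen_ball)

theorem measurableSet_trail_eq : ∀ (n : ℕ) (l : List ℕ), MeasurableSet {a | trail q (C a) n = l}
  | 0, l => .const ([] = l)
  | n + 1, [] => by simp [trail]
  | n + 1, k :: l => by
    have : {a | trail q (C a) (n + 1) = k :: l} =
        {a | trail q (C a) n = l} ∩ {a | firstNear q (C a ∩ ballChain q l) ((1 / 2) ^ n) = k} := by
      ext a
      simp only [trail, List.cons.injEq, mem_ofPred_eq, mem_inter_iff]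
      constructor <;> rintro ⟨rfl, rfl⟩ <;> exact ⟨rfl, rfl⟩
    rw [this]
    exact (measurableSet_trail_eq n l).inter
      (measurable_firstNear hC (isOpen_ballChain l) _ (measurableSet_singleton k))

theorem measurable_approx [MeasurableSpace X] (n : ℕ) : Measurable fun a => approx q (C a) n :=
  measurable_from_nat.comp <| measurable_comp_of_countable_cases (measurableSet_trail_eq hC n)
    fun l => measurable_firstNear hC (isOpen_ballChain l) _

theorem measurable_select [CompleteSpace X] [MeasurableSpace X] [BorelSpace X]
    (hq : DenseRange q) (hne : ∀ a, (C a).Nonempty) : Measurable fun a => select q (C a) :=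
  measurable_of_tendsto_metrizable (measurable_approx hC)
    (tendsto_pi_nhds.2 fun a => tendsto_approx_select hq (hne a))

end Measurable

end NestedBallSelection

open NestedBallSelection in
theorem measurableSet_range_of_isOpenQuotientMap {X Q Y : Type*} [TopologicalSpace X]
    [PolishSpace X] [TopologicalSpace Q] [T1Space Q] [TopologicalSpace Y] [T2Space Y]
    [MeasurableSpace Y] [BorelSpace Y] {π : X → Q} (hπ : IsOpenQuotientMap π) {F : Q → Y}
    (hF : Continuous F) (hFinj : Function.Injective F) : MeasurableSet (range F) := by
  rcases isEmpty_or_nonempty X with hX | hX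
  · have : IsEmpty Q := hπ.surjective.isEmpty
    rw [range_eq_empty]
    exact .empty
  borelize X
  let _ := TopologicalSpace.upgradeIsCompletelyMetrizable X
  set q := TopologicalSpace.denseSeq X
  have hq : DenseRange q := TopologicalSpace.denseRange_denseSeq X
  set fiber : X → Set X := fun x => π ⁻¹' {π x}
  set s : X → X := fun x => select q (fiber x)
  have hs_mem : ∀ x, π (s x) = π x := fun x =>
    select_mem hq (isClosed_singleton.preimage hπ.continuous) ⟨x, rfl⟩
  have hs_meas : Measurable s := by
    refine measurable_select (fun W hW => ?_) hq fun x => ⟨x, rfl⟩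
    have : {x | (fiber x ∩ W).Nonempty} = π ⁻¹' (π '' W) := by
      ext x
      exact ⟨fun ⟨y, hy, hyW⟩ => ⟨y, hyW, hy⟩, fun ⟨y, hyW, hy⟩ => ⟨y, hy, hyW⟩⟩
    rw [this]
    exact ((hπ.isOpenMap W hW).preimage hπ.continuous).measurableSet
  have hs_congr : ∀ {x y}, π x = π y → s x = s y := fun h => by simp only [s, fiber, h]
  have hT : MeasurableSet {x | s x = x} := measurableSet_eq_fun hs_meas measurable_id
  have hrange : range F = (F ∘ π) '' {x | s x = x} := by
    refine Subset.antisymm ?_ (image_subset_range _ _ |>.trans (range_comp_subset_range _ _))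
    rintro _ ⟨y, rfl⟩
    obtain ⟨x, rfl⟩ := hπ.surjective y
    exact ⟨s x, hs_congr (hs_mem x), by simp [hs_mem x]⟩
  have hinj : InjOn (F ∘ π) {x | s x = x} := fun x hx y hy hxy =>
    hx.symm.trans ((hs_congr (hFinj hxy)).trans hy)
  rw [hrange]
  exact hT.image_of_continuousOn_injOn (hF.comp hπ.continuous).continuousOn hinj

theorem MulAut.conj_eq_one_iff_mem_center {G : Type*} [Group G] {g : G} :
    MulAut.conj g = 1 ↔ g ∈ Subgroup.center G := by
  rw [Subgroup.mem_center_iff, MulEquiv.ext_iff]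
  refine forall_congr' fun x => ?_
  rw [MulAut.conj_apply, MulAut.one_apply, mul_inv_eq_iff_eq_mul, eq_comm]

theorem Subgroup.isClosed_center (G : Type*) [Group G] [TopologicalSpace G] [ContinuousMul G]
    [T2Space G] : IsClosed (Subgroup.center G : Set G) := by
  rw [Subgroup.coe_center, ← Set.centralizer_univ]
  exact Set.isClosed_centralizer _

theorem MulAut.conj_image_smul_subgroup {G : Type*} [Group G] {U : Subgroup G} {g h : G}
    (hU : h ∈ U) (hgU : g⁻¹ * h * g ∈ U) : MulAut.conj h '' (g • (U : Set G)) = g • U := by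
  have maps : ∀ h ∈ U, g⁻¹ * h * g ∈ U →
      MapsTo (MulAut.conj h) (g • (U : Set G)) (g • U) := by
    intro h hU hgU x hx
    rw [mem_leftCoset_iff] at hx ⊢
    simpa [mul_assoc] using U.mul_mem (U.mul_mem hgU hx) (U.inv_mem hU)
  refine (maps h hU hgU).image_subset.antisymm fun x hx => ?_
  refine ⟨MulAut.conj h⁻¹ x, maps h⁻¹ (U.inv_mem hU) ?_ hx, by simp [mul_assoc]⟩
  simpa [mul_assoc] using U.inv_mem hgU

theorem eventually_conj_image_smul_subgroup {G : Type*} [Group G] [TopologicalSpace G]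
    [IsTopologicalGroup G] {U : Subgroup G} (hU : IsOpen (U : Set G)) (g : G) :
    ∀ᶠ h in 𝓝 1, MulAut.conj h '' (g • (U : Set G)) = g • U := by
  have hconj : {h : G | g⁻¹ * h * g ∈ U} ∈ 𝓝 1 :=
    (hU.preimage (by fun_prop)).mem_nhds (by simp)
  filter_upwards [hU.mem_nhds U.one_mem, hconj] with h hU hgU
  exact MulAut.conj_image_smul_subgroup hU hgU

def conjAutHom (G : Type*) [Group G] [TopologicalSpace G] [IsTopologicalGroup G] :
    G →* contAut G :=
  MulAut.conj.codRestrict _ fun g => (conjAut G g).2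

theorem continuous_conjAutHom {G : Type*} [Group G] [TopologicalSpace G] [IsTopologicalGroup G]
    (S : Set (Subgroup G)) (hopen : ∀ U ∈ S, IsOpen (U : Set G))
    [TopologicalSpace (contAut G)] [ContinuousMul (contAut G)]
    (hbasisAut : (𝓝 (1 : contAut G)).HasBasis
      (fun F : Finset (Set G) => ∀ A ∈ F, ∃ g : G, ∃ U ∈ S, A = g • (U : Set G))
      (fun F => {φ : contAut G | ∀ A ∈ F, ⇑(φ : MulAut G) '' A = A})) :
    Continuous (conjAutHom G) := by
  refine continuous_of_continuousAt_one _ ?_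
  rw [ContinuousAt, map_one, hbasisAut.tendsto_right_iff]
  intro F hF
  refine (eventually_all_finset F).2 fun A hA => ?_
  obtain ⟨g, U, hU, rfl⟩ := hF A hA
  exact eventually_conj_image_smul_subgroup (hopen U hU) g

theorem stmt17_general (G : Type*) [Group G] [TopologicalSpace G] [IsTopologicalGroup G]
    [PolishSpace G]
    (S : Set (Subgroup G))
    (hopen : ∀ U ∈ S, IsOpen (U : Set G))
    (σ : TopologicalSpace ↥(contAut G))
    (hPolish : @PolishSpace ↥(contAut G) σ)
    (hgrp : @IsTopologicalGroup ↥(contAut G) σ _)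
    (hbasisAut : (@nhds _ σ (1 : ↥(contAut G))).HasBasis
      (fun F : Finset (Set G) => ∀ A ∈ F, ∃ g : G, ∃ U ∈ S, A = g • (U : Set G))
      (fun F => {φ : ↥(contAut G) | ∀ A ∈ F, ⇑(φ : MulAut G) '' A = A})) :
    ∃ F : G ⧸ Subgroup.center G → ↥(contAut G),
      (∀ g : G, F (QuotientGroup.mk g) = conjAut G g) ∧
      @Continuous _ _ _ σ F ∧
      Function.Injective F ∧
      @MeasurableSet ↥(contAut G) (@borel _ σ) (Set.range (conjAut G)) := by
  let _ := σ
  let F := QuotientGroup.lift (Subgroup.center G) (conjAutHom G) fun g hg =>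
    Subtype.ext (MulAut.conj_eq_one_iff_mem_center.2 hg)
  have hF_cont : Continuous F := QuotientGroup.isOpenQuotientMap_mk.continuous_comp_iff.1
    (continuous_conjAutHom S hopen hbasisAut)
  have hF_inj : Function.Injective F := by
    intro a b hab
    induction a using QuotientGroup.induction_on
    induction b using QuotientGroup.induction_on
    rw [QuotientGroup.eq, ← MulAut.conj_eq_one_iff_mem_center, map_mul, map_inv, inv_mul_eq_one]
    exact congrArg Subtype.val hab
  refine ⟨F, fun _ => rfl, hF_cont, hF_inj, ?_⟩
  borelize ↥(contAut G)
  have : T1Space (G ⧸ Subgroup.center G) :=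
    QuotientGroup.t1Space_iff.2 (Subgroup.isClosed_center G)
  rw [show Set.range (conjAut G) = Set.range F from QuotientGroup.mk_surjective.range_comp F]
  exact measurableSet_range_of_isOpenQuotientMap QuotientGroup.isOpenQuotientMap_mk hF_cont hF_inj

/-- Let `G` be a Polish group with a countable conjugation-basis `S` of open subgroups
invariant under `Aut(G)`, and suppose `Aut(G)` carries a Polish group topology `σ` whose
neighbourhood basis of the identity is given by the stabilisers of finitely many cosets
of subgroups in `S`. Then the natural map `G/Z(G) → Aut(G)` sending `g` to conjugation
by `g` is continuous and injective; consequently `Inn(G)` is a Borel subgroup of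
`Aut(G)`. -/
theorem stmt17 (G : Type*) [Group G] [TopologicalSpace G] [IsTopologicalGroup G]
    [PolishSpace G]
    (S : Set (Subgroup G)) (hcount : S.Countable)
    (hopen : ∀ U ∈ S, IsOpen (U : Set G))
    (hbasis : (nhds (1 : G)).HasBasis (· ∈ S) (fun U => (U : Set G)))
    (hinvar : ∀ U ∈ S, ∀ φ : ↥(contAut G),
      Subgroup.map (φ : MulAut G).toMonoidHom U ∈ S)
    (σ : TopologicalSpace ↥(contAut G))
    (hPolish : @PolishSpace ↥(contAut G) σ)
    (hgrp : @IsTopologicalGroup ↥(contAut G) σ _)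
    (hbasisAut : (@nhds _ σ (1 : ↥(contAut G))).HasBasis
      (fun F : Finset (Set G) => ∀ A ∈ F, ∃ g : G, ∃ U ∈ S, A = g • (U : Set G))
      (fun F => {φ : ↥(contAut G) | ∀ A ∈ F, ⇑(φ : MulAut G) '' A = A})) :
    ∃ F : G ⧸ Subgroup.center G → ↥(contAut G),
      (∀ g : G, F (QuotientGroup.mk g) = conjAut G g) ∧
      @Continuous _ _ _ σ F ∧
      Function.Injective F ∧
      @MeasurableSet ↥(contAut G) (@borel _ σ) (Set.range (conjAut G)) :=
  stmt17_general G S hopen σ hPolish hgrp hbasisAut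
end
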